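/- arXiv:2307.02676 — 3 statements merged into one kernel-verified Lean document; each statement's English description precedes it below -/
import Mathlib

section
/- Let T > 0 be a real number, let d, τ, N ≥ 1 be integers, let a : ℝ → ℂ be continuous with a(t) = 0 for all t ∉ [0, (N+1)T], and let ζ : ℝ → ℂ be continuous. Define b : ℝ → ℂ by b(t) = ∑_{k=0}^∞ C(k+d−1, d−1) · a(t + kτT) for t ∈ [0, (N+1)T] (a finite sum, since a has compact support) and b(t) = 0 for t ∉ [0, (N+1)T], and define v : [−dτT, 0) → ℂ by v(t) = ∑_{l=⌈−t/(τT)⌉}^{d} (−1)^l · C(d,l) · b(t + lτT). Then ∫_0^{(N+1)T} a(t) ζ(t) dt = ∫_0^{(N+1)T} b(t) · ( ∑_{l=0}^{d} (−1)^l C(d,l) ζ(t − lτT) ) dt − ∫_{−dτT}^{0} v(t) ζ(t) dt. -/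
/-!
Write `s = τT` and `d = e + 1`. On `[0, ∞)` the function `b` is the `d`-fold iterated tail sum
`F_e u = ∑_{k ≥ 0} C(k + e, e) a(u + k s)`. Pascal's rule gives `F_e u = F_{e-1} u + F_e (u + s)`
with `F_{-1} = a`, so `Δ_s^d F_e = (-1)^d a` and `a t = ∑_l (-1)^l C(d, l) b(t + l s)` for `t ≥ 0`.
Integrating this against `ζ` over `[0, (N+1)T]` and substituting `u = t + l s` moves each shift
onto `ζ`; since `b` vanishes outside `[0, (N+1)T]`, what is lost in the substitution is the
integral of `b(t + l s) ζ(t)` over `[-d s, 0]`, and on `[-d s, 0)` the weighted sum of these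
integrands is `v ζ`, because only the terms with `t + l s ≥ 0`, i.e. `l ≥ ⌈-t/s⌉`, survive.
-/

open MeasureTheory Finset fwdDiff

lemma finite_setOf_add_mul_le {s : ℝ} (hs : 0 < s) (x M : ℝ) : {k : ℕ | x + k * s ≤ M}.Finite :=
  (Set.finite_Iic ⌊(M - x) / s⌋₊).subset fun k (hk : x + k * s ≤ M) =>
    Nat.le_floor <| (le_div_iff₀ hs).2 <| by linarith

section IterTailSum

variable {E : Type*} [AddCommGroup E]

lemma hasFiniteSupport_smul_comp_add_mul {a : ℝ → E} {s M : ℝ} (hs : 0 < s)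
    (ha : ∀ t, M < t → a t = 0) (c : ℕ → ℕ) (u : ℝ) :
    (fun k : ℕ => c k • a (u + k * s)).HasFiniteSupport :=
  (finite_setOf_add_mul_le hs u M).subset fun k hk => by
    by_contra h
    exact hk (show c k • a _ = 0 by rw [ha _ (not_le.mp h), smul_zero])

variable [TopologicalSpace E]

noncomputable def iterTailSum (a : ℝ → E) (s : ℝ) (e : ℕ) (u : ℝ) : E :=
  ∑' k : ℕ, (k + e).choose e • a (u + k * s)

variable {a : ℝ → E} {s M : ℝ}

lemma summable_smul_comp_add_mul (hs : 0 < s) (ha : ∀ t, M < t → a t = 0)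
    (c : ℕ → ℕ) (u : ℝ) : Summable fun k : ℕ => c k • a (u + k * s) :=
  summable_of_hasFiniteSupport (hasFiniteSupport_smul_comp_add_mul hs ha c u)

lemma iterTailSum_eq_zero (hs : 0 ≤ s) (ha : ∀ t, M < t → a t = 0) (e : ℕ) {u : ℝ}
    (hu : M < u) : iterTailSum a s e u = 0 := by
  simp only [iterTailSum]
  rw [tsum_congr fun k => by rw [ha _ (by nlinarith [k.cast_nonneg (α := ℝ)]), smul_zero],
    tsum_zero]

variable [IsTopologicalAddGroup E]

lemma continuous_iterTailSum (hs : 0 < s) (ha : ∀ t, M < t → a t = 0) (ha_cont : Continuous a)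
    (e : ℕ) : Continuous (iterTailSum a s e) := by
  have hfinsum : iterTailSum a s e = fun u => ∑ᶠ k : ℕ, (k + e).choose e • a (u + k * s) :=
    funext fun u => tsum_eq_finsum (hasFiniteSupport_smul_comp_add_mul hs ha _ u)
  rw [hfinsum]
  refine continuous_finsum (fun k => (ha_cont.comp (by fun_prop)).nsmul _) fun x => ?_
  refine ⟨Set.Ioi (x - 1), Ioi_mem_nhds (by linarith),
    (finite_setOf_add_mul_le hs (x - 1) M).subset ?_⟩
  rintro k ⟨u, hu, hxu : x - 1 < u⟩
  by_contra h
  exact hu (show _ • a _ = 0 by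
    rw [ha _ (by simp only [Set.mem_ofPred_eq] at h; linarith), smul_zero])

variable [T2Space E]

lemma iterTailSum_zero_eq_add (hs : 0 < s) (ha : ∀ t, M < t → a t = 0) (u : ℝ) :
    iterTailSum a s 0 u = a u + iterTailSum a s 0 (u + s) := by
  rw [iterTailSum, (summable_smul_comp_add_mul hs ha _ u).tsum_eq_zero_add]
  simp only [iterTailSum, Nat.choose_zero_right, one_smul, CharP.cast_eq_zero, zero_mul, add_zero]
  congr 1
  exact tsum_congr fun k => by push_cast; ring_nf

lemma iterTailSum_succ_eq_add (hs : 0 < s) (ha : ∀ t, M < t → a t = 0)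
    (e : ℕ) (u : ℝ) :
    iterTailSum a s (e + 1) u = iterTailSum a s e u + iterTailSum a s (e + 1) (u + s) := by
  -- the `k = 0` term of the shifted sum vanishes, since `C(e, e + 1) = 0`
  have hshift :
      iterTailSum a s (e + 1) (u + s) = ∑' k : ℕ, (k + e).choose (e + 1) • a (u + k * s) := by
    rw [(summable_smul_comp_add_mul hs ha _ u).tsum_eq_zero_add]
    simp only [iterTailSum, Nat.choose_succ_self, zero_smul, zero_add]
    exact tsum_congr fun k => by rw [add_right_comm]; push_cast; ring_nf
  rw [hshift, iterTailSum, iterTailSum, ← (summable_smul_comp_add_mul hs ha _ u).tsum_add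
    (summable_smul_comp_add_mul hs ha _ u)]
  exact tsum_congr fun k => by rw [← add_smul, ← Nat.choose_succ_succ', add_assoc]

lemma fwdDiff_iterTailSum_zero (hs : 0 < s) (ha : ∀ t, M < t → a t = 0) :
    Δ_[s] (iterTailSum a s 0) = -a :=
  funext fun u => by simp [fwdDiff, iterTailSum_zero_eq_add hs ha u]

lemma fwdDiff_iterTailSum_succ (hs : 0 < s) (ha : ∀ t, M < t → a t = 0) (e : ℕ) :
    Δ_[s] (iterTailSum a s (e + 1)) = -iterTailSum a s e :=
  funext fun u => by simp [fwdDiff, iterTailSum_succ_eq_add hs ha e u]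

lemma fwdDiff_iter_iterTailSum (hs : 0 < s) (ha : ∀ t, M < t → a t = 0) (e : ℕ) :
    (Δ_[s])^[e + 1] (iterTailSum a s e) = (-1 : ℤ) ^ (e + 1) • a := by
  induction e with
  | zero => simp [fwdDiff_iterTailSum_zero hs ha]
  | succ e ih =>
    rw [Function.iterate_succ_apply, fwdDiff_iterTailSum_succ hs ha, ← neg_one_zsmul,
      fwdDiff_iter_const_smul, ih, smul_smul, pow_succ' _ (e + 1)]

lemma sum_range_shift_iterTailSum (hs : 0 < s) (ha : ∀ t, M < t → a t = 0)
    (e : ℕ) (t : ℝ) :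
    ∑ l ∈ range (e + 2), ((-1 : ℤ) ^ l * (e + 1).choose l) • iterTailSum a s e (t + l * s) =
      a t := by
  have h := fwdDiff_iter_eq_sum_shift s (iterTailSum a s e) (e + 1) t
  rw [fwdDiff_iter_iterTailSum hs ha, Pi.smul_apply] at h
  have hsign : ∀ l ∈ range (e + 2), (-1 : ℤ) ^ (e + 1) * (-1) ^ (e + 1 - l) = (-1) ^ l := by
    intro l hl
    have hl : l ≤ e + 1 := Nat.lt_succ_iff.mp (mem_range.mp hl)
    calc (-1 : ℤ) ^ (e + 1) * (-1) ^ (e + 1 - l)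
        = (-1) ^ (e + 1 - l + (e + 1 - l)) * (-1) ^ l := by rw [← pow_sub_mul_pow _ hl]; ring
      _ = (-1) ^ l := by rw [Even.neg_one_pow ⟨_, rfl⟩, one_mul]
  symm
  calc a t = (-1 : ℤ) ^ (e + 1) • ((-1 : ℤ) ^ (e + 1) • a t) := by
        rw [smul_smul, ← pow_add, Even.neg_one_pow ⟨_, rfl⟩, one_smul]
    _ = _ := by
        rw [h, smul_sum]
        refine sum_congr rfl fun l hl => ?_
        rw [smul_smul, ← mul_assoc, hsign l hl, nsmul_eq_mul]

end IterTailSum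

lemma eq_sum_range_shift_of_eq_iterTailSum {R : Type*} [CommRing R] [TopologicalSpace R]
    [IsTopologicalRing R] [T2Space R] {a b : ℝ → R} {s M : ℝ} (hs : 0 < s)
    (ha : ∀ t, M < t → a t = 0) (e : ℕ) (hb : ∀ u, 0 ≤ u → b u = iterTailSum a s e u) {t : ℝ}
    (ht : 0 ≤ t) :
    a t = ∑ l ∈ range (e + 1 + 1), (-1 : R) ^ l * ((e + 1).choose l : R) * b (t + l * s) := by
  rw [← sum_range_shift_iterTailSum hs ha e t]
  refine sum_congr rfl fun l _ => ?_
  rw [hb _ (by positivity), zsmul_eq_mul]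
  push_cast
  ring

lemma integrable_of_eqOn_Icc {E : Type*} [NormedAddCommGroup E] {f g : ℝ → E} {x y : ℝ}
    (hg : Continuous g) (hfg : Set.EqOn f g (Set.Icc x y)) (hf : ∀ t ∉ Set.Icc x y, f t = 0) :
    Integrable f :=
  ((hg.continuousOn.congr hfg).integrableOn_Icc).integrable_of_forall_notMem_eq_zero hf

lemma intervalIntegral_eq_of_forall_notMem_Icc_eq_zero {E : Type*} [NormedAddCommGroup E]
    [NormedSpace ℝ E] {f : ℝ → E} {a b a' b' : ℝ} (ha : a' ≤ a) (hab : a ≤ b) (hb : b ≤ b')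
    (hf : IntervalIntegrable f volume a' b') (h : ∀ t ∉ Set.Icc a b, f t = 0) :
    ∫ t in a'..b', f t = ∫ t in a..b, f t := by
  have hsub : ∀ {c d : ℝ}, a' ≤ c → c ≤ d → d ≤ b' → IntervalIntegrable f volume c d :=
    fun hc hcd hd => hf.mono_set <| by
      rw [Set.uIcc_of_le (hc.trans (hcd.trans hd)), Set.uIcc_of_le hcd]
      exact Set.Icc_subset_Icc hc hd
  have hleft : ∫ t in a'..a, f t = 0 := by
    rw [intervalIntegral.integral_congr_Ioo_of_le ha fun t ht => h t fun h' => ht.2.not_ge h'.1,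
      intervalIntegral.integral_zero]
  have hright : ∫ t in b..b', f t = 0 := by
    rw [intervalIntegral.integral_congr_Ioo_of_le hb fun t ht => h t fun h' => ht.1.not_ge h'.2,
      intervalIntegral.integral_zero]
  rw [← intervalIntegral.integral_add_adjacent_intervals (hsub le_rfl ha (hab.trans hb))
      (hsub ha (hab.trans hb) le_rfl),
    ← intervalIntegral.integral_add_adjacent_intervals (hsub ha hab hb)
      (hsub (ha.trans hab) hb le_rfl),
    hleft, hright, zero_add, add_zero]

section ShiftedIntegrals

variable {𝕜 : Type*} [RCLike 𝕜] {b ζ : ℝ → 𝕜} {M D : ℝ}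

lemma intervalIntegrable_comp_add_mul (hb : Integrable b) (hζ : Continuous ζ) (c x y : ℝ) :
    IntervalIntegrable (fun t => b (t + c) * ζ t) volume x y :=
  ((hb.comp_add_right c).intervalIntegrable).mul_continuousOn hζ.continuousOn

lemma integral_comp_add_mul_eq_sub (hM : 0 ≤ M) (hb : Integrable b)
    (hb0 : ∀ t ∉ Set.Icc 0 M, b t = 0) (hζ : Continuous ζ) {c : ℝ} (hc : 0 ≤ c) (hcD : c ≤ D) :
    ∫ t in 0..M, b (t + c) * ζ t =
      (∫ t in 0..M, b t * ζ (t - c)) - ∫ t in -D..0, b (t + c) * ζ t := by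
  have hint := intervalIntegrable_comp_add_mul hb hζ c
  have hshift : ∫ t in 0..M, b t * ζ (t - c) = ∫ t in -D..M, b (t + c) * ζ t := by
    have h := intervalIntegral.integral_comp_sub_right (a := 0) (b := M)
      (fun t => b (t + c) * ζ t) c
    simp only [sub_add_cancel, zero_sub] at h
    rw [h]
    refine (intervalIntegral_eq_of_forall_notMem_Icc_eq_zero (by linarith) (by linarith)
      (by linarith) (hint _ _) fun t ht => ?_).symm
    rw [hb0 (t + c) fun h' => ht ⟨by linarith [h'.1], by linarith [h'.2]⟩, zero_mul]
  rw [hshift, eq_sub_iff_add_eq, add_comm,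
    intervalIntegral.integral_add_adjacent_intervals (hint _ _) (hint _ _)]

lemma integral_sum_comp_add_mul_eq {ι : Type*} (S : Finset ι) (w : ι → 𝕜) {c : ι → ℝ}
    (hc : ∀ i ∈ S, 0 ≤ c i ∧ c i ≤ D) (hM : 0 ≤ M) (hb : Integrable b)
    (hb0 : ∀ t ∉ Set.Icc 0 M, b t = 0) (hζ : Continuous ζ) :
    ∫ t in 0..M, (∑ i ∈ S, w i * b (t + c i)) * ζ t =
      (∫ t in 0..M, b t * ∑ i ∈ S, w i * ζ (t - c i)) -
        ∫ t in -D..0, (∑ i ∈ S, w i * b (t + c i)) * ζ t := by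
  have hsum : ∀ (x y : ℝ) (g : ι → ℝ → 𝕜), (∀ i, IntervalIntegrable (g i) volume x y) →
      ∫ t in x..y, ∑ i ∈ S, w i * g i t = ∑ i ∈ S, w i * ∫ t in x..y, g i t := fun x y g hg => by
    rw [intervalIntegral.integral_finsetSum fun i _ => (hg i).const_mul (w i)]
    simp only [intervalIntegral.integral_const_mul]
  have hint_shift : ∀ i x y, IntervalIntegrable (fun t => b t * ζ (t - c i)) volume x y :=
    fun i x y => hb.intervalIntegrable.mul_continuousOn (by fun_prop)
  simp only [sum_mul, mul_sum, mul_assoc, mul_left_comm (b _) (w _)]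
  rw [hsum _ _ _ fun i => intervalIntegrable_comp_add_mul hb hζ (c i) _ _,
    hsum _ _ _ fun i => hint_shift i _ _,
    hsum _ _ _ fun i => intervalIntegrable_comp_add_mul hb hζ (c i) _ _, ← sum_sub_distrib]
  refine sum_congr rfl fun i hi => ?_
  rw [integral_comp_add_mul_eq_sub hM hb hb0 hζ (hc i hi).1 (hc i hi).2, mul_sub]

end ShiftedIntegrals

lemma sum_Icc_toNat_ceil_eq_sum_range {A : Type*} [AddCommMonoid A] {s t : ℝ} (hs : 0 < s)
    (n : ℕ) {g : ℕ → A} (hg : ∀ l : ℕ, t + l * s < 0 → g l = 0) :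
    ∑ l ∈ Icc ⌈-t / s⌉.toNat n, g l = ∑ l ∈ range (n + 1), g l := by
  refine sum_subset (fun l hl => mem_range.2 <| Nat.lt_add_one_of_le (mem_Icc.1 hl).2)
    fun l hl hl' => hg l ?_
  have hlt : l < ⌈-t / s⌉.toNat := by
    simp only [mem_Icc, mem_range, not_and_or, not_le] at hl hl'
    omega
  rw [Int.lt_toNat, Int.lt_ceil, lt_div_iff₀ hs] at hlt
  push_cast at hlt
  linarith

theorem functional_representation_general (T : ℝ) (hT : 0 < T) (d τ N : ℕ)
    (hd : 1 ≤ d) (hτ : 1 ≤ τ)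
    (a ζ : ℝ → ℂ) (ha_cont : Continuous a)
    (ha_supp : ∀ t : ℝ, t ∉ Set.Icc (0 : ℝ) (((N : ℝ) + 1) * T) → a t = 0)
    (hζ : Continuous ζ)
    (b : ℝ → ℂ)
    (hb_in : ∀ t ∈ Set.Icc (0 : ℝ) (((N : ℝ) + 1) * T),
      b t = ∑' k : ℕ, (((k + d - 1).choose (d - 1) : ℕ) : ℂ) * a (t + (k : ℝ) * (τ : ℝ) * T))
    (hb_out : ∀ t : ℝ, t ∉ Set.Icc (0 : ℝ) (((N : ℝ) + 1) * T) → b t = 0)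
    (v : ℝ → ℂ)
    (hv : ∀ t ∈ Set.Ico (-((d : ℝ) * (τ : ℝ) * T)) (0 : ℝ),
      v t = ∑ l ∈ Finset.Icc (⌈(-t) / ((τ : ℝ) * T)⌉.toNat) d,
        (-1 : ℂ) ^ l * (d.choose l : ℂ) * b (t + (l : ℝ) * (τ : ℝ) * T)) :
    (∫ t in (0 : ℝ)..(((N : ℝ) + 1) * T), a t * ζ t) =
      (∫ t in (0 : ℝ)..(((N : ℝ) + 1) * T),
        b t * ∑ l ∈ Finset.range (d + 1),
          (-1 : ℂ) ^ l * (d.choose l : ℂ) * ζ (t - (l : ℝ) * (τ : ℝ) * T)) -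
      ∫ t in (-((d : ℝ) * (τ : ℝ) * T))..(0 : ℝ), v t * ζ t := by
  obtain ⟨e, rfl⟩ : ∃ e, d = e + 1 := ⟨d - 1, by omega⟩
  set s : ℝ := τ * T
  set M : ℝ := (N + 1) * T
  have hs : 0 < s := mul_pos (by exact_mod_cast hτ) hT
  have hM : 0 ≤ M := by positivity
  simp only [show ∀ x : ℝ, x * τ * T = x * s from fun x => mul_assoc x τ T] at hb_in hv ⊢
  have ha_lt : ∀ t, M < t → a t = 0 := fun t ht => ha_supp t fun h => ht.not_ge h.2
  have hbF : ∀ u, 0 ≤ u → b u = iterTailSum a s e u := by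
    intro u hu
    rcases le_or_gt u M with huM | huM
    · simp [hb_in u ⟨hu, huM⟩, iterTailSum, nsmul_eq_mul]
    · rw [hb_out u fun h => huM.not_ge h.2, iterTailSum_eq_zero hs.le ha_lt e huM]
  have hb_int : Integrable b :=
    integrable_of_eqOn_Icc (continuous_iterTailSum hs ha_lt ha_cont e) (fun u hu => hbF u hu.1)
      hb_out
  have hv_eq : ∀ t ∈ Set.Ioo (-(((e + 1 : ℕ) : ℝ) * s)) 0,
      v t = ∑ l ∈ range (e + 1 + 1), (-1 : ℂ) ^ l * ((e + 1).choose l : ℂ) * b (t + l * s) :=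
    fun t ht => by
      rw [hv t ⟨ht.1.le, ht.2⟩]
      exact sum_Icc_toNat_ceil_eq_sum_range hs _ fun l hl => by
        rw [hb_out _ fun h => hl.not_ge h.1, mul_zero]
  have hshifts : ∀ l ∈ range (e + 1 + 1), 0 ≤ (l : ℝ) * s ∧ (l : ℝ) * s ≤ ((e + 1 : ℕ) : ℝ) * s :=
    fun l hl => ⟨by positivity, mul_le_mul_of_nonneg_right
      (by exact_mod_cast Nat.lt_succ_iff.mp (mem_range.mp hl)) hs.le⟩
  calc ∫ t in 0..M, a t * ζ t
      = ∫ t in 0..M, (∑ l ∈ range (e + 1 + 1),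
          (-1 : ℂ) ^ l * ((e + 1).choose l : ℂ) * b (t + l * s)) * ζ t :=
        intervalIntegral.integral_congr fun t ht => by
          rw [eq_sum_range_shift_of_eq_iterTailSum hs ha_lt e hbF (Set.uIcc_of_le hM ▸ ht).1]
    _ = _ := integral_sum_comp_add_mul_eq _ _ hshifts hM hb_int hb_out hζ
    _ = _ := congrArg (_ - ·) <| (intervalIntegral.integral_congr_Ioo_of_le
        (neg_nonpos.2 (by positivity))
        fun t ht => by simp only [hv_eq t ht]).symm

/-- Lemma 2.1 of the paper: the functional `A_{NT}ζ = ∫_0^{(N+1)T} a(t)ζ(t)dt` is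
represented as `B_{NT}ζ − V_{NT}ζ`, where `B_{NT}ζ` depends on the `d`-th increments
`ζ^{(d)}(t, τT)` on `[0,(N+1)T]` and `V_{NT}ζ` depends on the values of `ζ` on
`[−dτT, 0)`. -/
theorem functional_representation (T : ℝ) (hT : 0 < T) (d τ N : ℕ)
    (hd : 1 ≤ d) (hτ : 1 ≤ τ) (hN : 1 ≤ N)
    (a ζ : ℝ → ℂ) (ha_cont : Continuous a)
    (ha_supp : ∀ t : ℝ, t ∉ Set.Icc (0 : ℝ) (((N : ℝ) + 1) * T) → a t = 0)
    (hζ : Continuous ζ)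
    (b : ℝ → ℂ)
    (hb_in : ∀ t ∈ Set.Icc (0 : ℝ) (((N : ℝ) + 1) * T),
      b t = ∑' k : ℕ, (((k + d - 1).choose (d - 1) : ℕ) : ℂ) * a (t + (k : ℝ) * (τ : ℝ) * T))
    (hb_out : ∀ t : ℝ, t ∉ Set.Icc (0 : ℝ) (((N : ℝ) + 1) * T) → b t = 0)
    (v : ℝ → ℂ)
    (hv : ∀ t ∈ Set.Ico (-((d : ℝ) * (τ : ℝ) * T)) (0 : ℝ),
      v t = ∑ l ∈ Finset.Icc (⌈(-t) / ((τ : ℝ) * T)⌉.toNat) d,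
        (-1 : ℂ) ^ l * (d.choose l : ℂ) * b (t + (l : ℝ) * (τ : ℝ) * T)) :
    (∫ t in (0 : ℝ)..(((N : ℝ) + 1) * T), a t * ζ t) =
      (∫ t in (0 : ℝ)..(((N : ℝ) + 1) * T),
        b t * ∑ l ∈ Finset.range (d + 1),
          (-1 : ℂ) ^ l * (d.choose l : ℂ) * ζ (t - (l : ℝ) * (τ : ℝ) * T)) -
      ∫ t in (-((d : ℝ) * (τ : ℝ) * T))..(0 : ℝ), v t * ζ t :=
  functional_representation_general T hT d τ N hd hτ a ζ ha_cont ha_supp hζ b hb_in hb_out v hv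
end

section
/- Let T > 0 be a real number, let d, τ, N ≥ 1 be integers, let a : ℝ → ℂ be continuous with a(t) = 0 for all t ∉ [0, (N+1)T], and let ξ, η : ℝ → ℂ be continuous functions. Set ζ = ξ + η. With b and v defined from a as follows: b(t) = ∑_{k=0}^∞ C(k+d−1, d−1) · a(t + kτT) for t ∈ [0, (N+1)T] and b(t) = 0 otherwise, and v(t) = ∑_{l=⌈−t/(τT)⌉}^{d} (−1)^l C(d,l) b(t + lτT) for t ∈ [−dτT, 0), one has ∫_0^{(N+1)T} a(t) ξ(t) dt = ∫_0^{(N+1)T} b(t) · ( ∑_{l=0}^{d} (−1)^l C(d,l) ζ(t − lτT) ) dt − ∫_{−dτT}^{0} v(t) ζ(t) dt − ∫_0^{(N+1)T} a(t) η(t) dt. -/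
/-!
With `h = τT`, the substitution `t ↦ t + lh` moves the increments of `ζ` onto `b`:
`∫ b ζ^{(d)}(·, h) = ∫ W ζ` where `W(s) = ∑_{l ≤ d} (-1)^l C(d,l) b(s + lh)`.
Because `∑_k C(k+d-1, d-1) X^k = (1 - X)^{-d}`, this `d`-th difference inverts the binomial
series defining `b`, so `W = a` on `[0, ∞)`. On `[-dh, 0)` only the shifts landing in
`[0, (N+1)T]` survive, which is `v`, and `W = 0` below `-dh`. Hence the `b`-term equals
`∫_{-dh}^0 v ζ + ∫_0^{(N+1)T} a ζ`, and the identity follows by splitting `ζ = ξ + η`.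
-/

open MeasureTheory Finset

namespace PowerSeries

theorem coeff_one_sub_X_pow (R : Type*) [CommRing R] (n l : ℕ) :
    coeff l ((1 - X : R⟦X⟧) ^ n) = (-1) ^ l * n.choose l := by
  have : (1 - X : R⟦X⟧) = rescale (-1) (1 + X) := by simp [sub_eq_add_neg]
  rw [this, ← map_pow, coeff_rescale, ← Polynomial.coe_X, ← Polynomial.coe_one,
    ← Polynomial.coe_add, ← Polynomial.coe_pow, Polynomial.coeff_coe,
    Polynomial.coeff_one_add_X_pow]

end PowerSeries

section BinomialInversion

open PowerSeries

theorem sum_antidiagonal_neg_one_pow_choose_mul_choose (R : Type*) [CommRing R] (d m : ℕ) :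
    ∑ p ∈ antidiagonal m, (-1 : R) ^ p.1 * (d + 1).choose p.1 * (p.2 + d).choose d =
      if m = 0 then 1 else 0 := by
  have := congrArg (coeff m) (mk_add_choose_mul_one_sub_pow_eq_one R d)
  rw [mul_comm, coeff_mul, coeff_one] at this
  simpa [coeff_one_sub_X_pow, add_comm] using this

theorem sum_neg_one_pow_choose_mul_sum_choose {R : Type*} [CommRing R] (d K : ℕ) (x : ℕ → R)
    (hx : ∀ m, K ≤ m → x m = 0) :
    ∑ l ∈ range (d + 2), (-1) ^ l * (d + 1).choose l *
      ∑ k ∈ range K, (k + d).choose d * x (l + k) = x 0 := by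
  set f : ℕ × ℕ → R :=
    fun p => (-1) ^ p.1 * (d + 1).choose p.1 * ((p.2 + d).choose d * x (p.1 + p.2))
  calc _ = ∑ p ∈ range (d + 2) ×ˢ range K, f p := by
          simp only [sum_product, mul_sum, f]
    _ = ∑ q ∈ (range K).sigma antidiagonal, f q.2 := by
          refine sum_bij_ne_zero (fun p _ _ => ⟨p.1 + p.2, p⟩) ?_ ?_ ?_ (fun _ _ _ => rfl)
          · intro p _ hp
            simp only [mem_sigma, mem_range, HasAntidiagonal.mem_antidiagonal, and_true]
            by_contra! hK
            exact hp (by simp [f, hx _ hK])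
          · intro p _ _ q _ _ h
            exact (Sigma.mk.inj_iff.1 h).2.eq
          · rintro ⟨m, p⟩ hq hp
            simp only [mem_sigma, mem_range, HasAntidiagonal.mem_antidiagonal] at hq
            refine ⟨p, ?_, hp, by simp [hq.2]⟩
            rw [mem_product, mem_range, mem_range]
            refine ⟨?_, by omega⟩
            by_contra! hd
            exact hp (by simp [f, Nat.choose_eq_zero_of_lt (show d + 1 < p.1 by omega)])
    _ = ∑ m ∈ range K, (if m = 0 then 1 else 0) * x m := by
          rw [sum_sigma]
          refine sum_congr rfl fun m _ => ?_
          rw [← sum_antidiagonal_neg_one_pow_choose_mul_choose R d m, sum_mul]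
          refine sum_congr rfl fun p hp => ?_
          simp only [f, HasAntidiagonal.mem_antidiagonal.1 hp]
          ring
    _ = x 0 := by
          rcases K.eq_zero_or_pos with rfl | hK
          · simp [hx 0 le_rfl]
          · simp [hK]

end BinomialInversion

-- The paper's increment `f^{(d)}(t, h)`; `increment d (-h)` is its adjoint for `∫ dt`.
noncomputable def increment (d : ℕ) (h : ℝ) (f : ℝ → ℂ) (t : ℝ) : ℂ :=
  ∑ l ∈ range (d + 1), (-1 : ℂ) ^ l * d.choose l * f (t - l * h)

theorem apply_add_nat_mul_eq_zero {a : ℝ → ℂ} {h S t : ℝ} {K k : ℕ} (hh : 0 ≤ h)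
    (ha : ∀ t, S < t → a t = 0) (hKS : S < K * h) (ht : 0 ≤ t) (hk : K ≤ k) :
    a (t + k * h) = 0 :=
  ha _ (by nlinarith [(Nat.cast_le.2 hk : (K : ℝ) ≤ k)])

theorem eq_sum_choose_of_eq_tsum {a b : ℝ → ℂ} {h S : ℝ} (e K : ℕ) (hh : 0 ≤ h)
    (hKS : S < K * h) (ha : ∀ t, S < t → a t = 0)
    (hb_in : ∀ t ∈ Set.Icc 0 S, b t = ∑' k : ℕ, ((k + e).choose e : ℂ) * a (t + k * h))
    (hb_out : ∀ t ∉ Set.Icc 0 S, b t = 0) {t : ℝ} (ht : 0 ≤ t) :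
    b t = ∑ k ∈ range K, ((k + e).choose e : ℂ) * a (t + k * h) := by
  by_cases hmem : t ∈ Set.Icc 0 S
  · rw [hb_in t hmem]
    refine tsum_eq_sum fun k hk => ?_
    rw [apply_add_nat_mul_eq_zero hh ha hKS ht (by simpa using hk), mul_zero]
  · have hSt : S < t := by simpa [ht] using hmem
    rw [hb_out t hmem]
    refine (sum_eq_zero fun k _ => ?_).symm
    rw [ha _ (by nlinarith [(k.cast_nonneg : (0 : ℝ) ≤ k)]), mul_zero]

theorem increment_neg_eq_of_eq_sum_choose {a b : ℝ → ℂ} {h S : ℝ} (e K : ℕ) (hh : 0 ≤ h)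
    (hKS : S < K * h) (ha : ∀ t, S < t → a t = 0)
    (hb : ∀ t, 0 ≤ t → b t = ∑ k ∈ range K, ((k + e).choose e : ℂ) * a (t + k * h))
    {s : ℝ} (hs : 0 ≤ s) : increment (e + 1) (-h) b s = a s := by
  have := sum_neg_one_pow_choose_mul_sum_choose e K (fun m => a (s + m * h))
    fun m hm => apply_add_nat_mul_eq_zero hh ha hKS hs hm
  simp only [CharP.cast_eq_zero, zero_mul, add_zero] at this
  rw [← this]
  refine sum_congr rfl fun l _ => ?_
  rw [mul_neg, sub_neg_eq_add, hb _ (by positivity)]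
  congr 2 with k
  push_cast
  ring_nf

theorem increment_neg_eq_sum_Icc_ceil {b : ℝ → ℂ} {h : ℝ} (d : ℕ) (hh : 0 < h)
    (hb : ∀ t < 0, b t = 0) (s : ℝ) :
    increment d (-h) b s =
      ∑ l ∈ Icc ⌈-s / h⌉.toNat d, (-1 : ℂ) ^ l * d.choose l * b (s + l * h) := by
  simp only [increment, mul_neg, sub_neg_eq_add]
  refine (sum_subset (fun l hl => ?_) fun l hl hl' => ?_).symm
  · simp only [mem_Icc, mem_range] at hl ⊢
    omega
  · have hl_lt : (l : ℝ) < -s / h := by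
      rw [mem_Icc, not_and_or, not_le, not_le] at hl'
      rw [mem_range] at hl
      exact_mod_cast Int.lt_ceil.1 (Int.lt_toNat.1 (by omega))
    rw [lt_div_iff₀ hh] at hl_lt
    rw [hb _ (by linarith), mul_zero]

theorem increment_neg_eq_zero_of_lt {b : ℝ → ℂ} {h : ℝ} (d : ℕ) (hh : 0 ≤ h)
    (hb : ∀ t < 0, b t = 0) {s : ℝ} (hs : s < -(d * h)) : increment d (-h) b s = 0 := by
  refine sum_eq_zero fun l hl => ?_
  have : (l : ℝ) * h ≤ d * h :=
    mul_le_mul_of_nonneg_right (by exact_mod_cast Nat.lt_succ_iff.1 (mem_range.1 hl)) hh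
  rw [mul_neg, sub_neg_eq_add, hb _ (by linarith), mul_zero]

theorem increment_neg_eq_zero_of_gt {b : ℝ → ℂ} {h S : ℝ} (d : ℕ) (hh : 0 ≤ h)
    (hb : ∀ t, S < t → b t = 0) {s : ℝ} (hs : S < s) : increment d (-h) b s = 0 := by
  refine sum_eq_zero fun l _ => ?_
  rw [mul_neg, sub_neg_eq_add, hb _ (by nlinarith [(l.cast_nonneg : (0 : ℝ) ≤ l)]), mul_zero]

theorem integrable_increment_neg_mul {f g : ℝ → ℂ} (d : ℕ) (h : ℝ)
    (hfg : ∀ l ∈ range (d + 1), Integrable fun t => f t * g (t - l * h)) :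
    Integrable fun t => increment d (-h) f t * g t := by
  simp only [increment, sum_mul]
  refine integrable_finsetSum _ fun l hl => ?_
  simpa [mul_assoc] using
    ((hfg l hl).comp_add_right (l * h)).const_mul ((-1 : ℂ) ^ l * d.choose l)

theorem integral_mul_increment {f g : ℝ → ℂ} (d : ℕ) (h : ℝ)
    (hfg : ∀ l ∈ range (d + 1), Integrable fun t => f t * g (t - l * h)) :
    ∫ t, f t * increment d h g t = ∫ t, increment d (-h) f t * g t := by
  set c : ℕ → ℂ := fun l => (-1 : ℂ) ^ l * d.choose l
  have hgf : ∀ l ∈ range (d + 1), Integrable fun t => c l * f (t - l * -h) * g t :=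
    fun l hl => by simpa [mul_assoc] using ((hfg l hl).comp_add_right (l * h)).const_mul (c l)
  have hfg' : ∀ l ∈ range (d + 1), Integrable fun t => f t * (c l * g (t - l * h)) :=
    fun l hl => by simpa [mul_left_comm] using (hfg l hl).const_mul (c l)
  have hshift (l : ℕ) :
      ∫ t, f t * (c l * g (t - l * h)) = ∫ t, c l * f (t - l * -h) * g t := by
    rw [← integral_add_right_eq_self _ ((l : ℝ) * h)]
    congr 1 with t
    simp only [mul_neg, sub_neg_eq_add, add_sub_cancel_right]
    ring
  calc ∫ t, f t * increment d h g t
        = ∫ t, ∑ l ∈ range (d + 1), f t * (c l * g (t - l * h)) := by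
        simp only [increment, mul_sum, c]
    _ = ∫ t, ∑ l ∈ range (d + 1), c l * f (t - l * -h) * g t := by
        rw [integral_finsetSum _ hfg', integral_finsetSum _ hgf]
        exact sum_congr rfl fun l _ => hshift l
    _ = ∫ t, increment d (-h) f t * g t := by simp only [increment, sum_mul, c]

theorem integrable_mul_of_continuousOn_Icc {f g : ℝ → ℂ} {x y : ℝ}
    (hf : ContinuousOn f (Set.Icc x y)) (hf0 : ∀ t ∉ Set.Icc x y, f t = 0)
    (hg : ContinuousOn g (Set.Icc x y)) : Integrable fun t => f t * g t := by
  have : (fun t => f t * g t) = (Set.Icc x y).indicator fun t => f t * g t := by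
    ext t
    by_cases ht : t ∈ Set.Icc x y <;> simp [ht, hf0]
  rw [this, integrable_indicator_iff measurableSet_Icc]
  exact (hf.mul hg).integrableOn_compact isCompact_Icc

theorem intervalIntegral_eq_integral_of_eq_zero_off_Icc {E : Type*} [NormedAddCommGroup E]
    [NormedSpace ℝ E] {f : ℝ → E} {x y : ℝ} (hxy : x ≤ y) (hf : ∀ t ∉ Set.Icc x y, f t = 0) :
    ∫ t in x..y, f t = ∫ t, f t := by
  rw [intervalIntegral.integral_of_le hxy, ← integral_Icc_eq_integral_Ioc,
    setIntegral_eq_integral_of_forall_compl_eq_zero hf]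

theorem integral_mul_increment_eq_add {a b v ζ : ℝ → ℂ} {h S : ℝ} (d : ℕ) (hh : 0 ≤ h)
    (hS : 0 ≤ S) (hb : ContinuousOn b (Set.Icc 0 S)) (hb0 : ∀ t ∉ Set.Icc 0 S, b t = 0)
    (hζ : Continuous ζ) (ha : ∀ s, 0 ≤ s → increment d (-h) b s = a s)
    (hv : ∀ s ∈ Set.Ico (-(d * h)) 0, increment d (-h) b s = v s) :
    ∫ t in 0..S, b t * increment d h ζ t =
      (∫ t in -(d * h)..0, v t * ζ t) + ∫ t in 0..S, a t * ζ t := by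
  have hdh : -(d * h) ≤ 0 := by simp only [neg_nonpos]; positivity
  have hint : ∀ l ∈ range (d + 1), Integrable fun t => b t * ζ (t - l * h) := fun l _ =>
    integrable_mul_of_continuousOn_Icc hb hb0 (hζ.comp (continuous_sub_right _)).continuousOn
  have hWint := integrable_increment_neg_mul d h hint
  have hW0 : ∀ t ∉ Set.Icc (-(d * h)) S, increment d (-h) b t * ζ t = 0 := by
    intro t ht
    rcases not_and_or.1 ht with ht | ht
    · rw [increment_neg_eq_zero_of_lt d hh (fun t ht => hb0 t fun h' => ?_) (not_le.1 ht),
        zero_mul]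
      linarith [h'.1]
    · rw [increment_neg_eq_zero_of_gt d hh (fun t ht => hb0 t fun h' => ?_) (not_le.1 ht),
        zero_mul]
      linarith [h'.2]
  calc ∫ t in 0..S, b t * increment d h ζ t = ∫ t, b t * increment d h ζ t :=
        intervalIntegral_eq_integral_of_eq_zero_off_Icc hS fun t ht => by rw [hb0 t ht, zero_mul]
    _ = ∫ t, increment d (-h) b t * ζ t := integral_mul_increment d h hint
    _ = ∫ t in -(d * h)..S, increment d (-h) b t * ζ t :=
        (intervalIntegral_eq_integral_of_eq_zero_off_Icc (hdh.trans hS) hW0).symm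
    _ = (∫ t in -(d * h)..0, increment d (-h) b t * ζ t) +
          ∫ t in 0..S, increment d (-h) b t * ζ t :=
        (intervalIntegral.integral_add_adjacent_intervals hWint.intervalIntegrable
          hWint.intervalIntegrable).symm
    _ = _ := by
      congr 1
      · rw [intervalIntegral.integral_of_le hdh, intervalIntegral.integral_of_le hdh,
          ← integral_Ico_eq_integral_Ioc, ← integral_Ico_eq_integral_Ioc]
        exact setIntegral_congr_fun measurableSet_Ico fun s hs => by rw [hv s hs]
      · refine intervalIntegral.integral_congr fun s hs => ?_
        rw [Set.uIcc_of_le hS] at hs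
        rw [ha s hs.1]

theorem functional_representation_noise_general (T : ℝ) (hT : 0 < T) (d τ N : ℕ)
    (hd : 1 ≤ d) (hτ : 1 ≤ τ)
    (a ξ η : ℝ → ℂ) (ha_cont : Continuous a)
    (ha_supp : ∀ t : ℝ, t ∉ Set.Icc (0 : ℝ) (((N : ℝ) + 1) * T) → a t = 0)
    (hξ : Continuous ξ) (hη : Continuous η)
    (b : ℝ → ℂ)
    (hb_in : ∀ t ∈ Set.Icc (0 : ℝ) (((N : ℝ) + 1) * T),
      b t = ∑' k : ℕ, (((k + d - 1).choose (d - 1) : ℕ) : ℂ) * a (t + (k : ℝ) * (τ : ℝ) * T))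
    (hb_out : ∀ t : ℝ, t ∉ Set.Icc (0 : ℝ) (((N : ℝ) + 1) * T) → b t = 0)
    (v : ℝ → ℂ)
    (hv : ∀ t ∈ Set.Ico (-((d : ℝ) * (τ : ℝ) * T)) (0 : ℝ),
      v t = ∑ l ∈ Finset.Icc (⌈(-t) / ((τ : ℝ) * T)⌉.toNat) d,
        (-1 : ℂ) ^ l * (d.choose l : ℂ) * b (t + (l : ℝ) * (τ : ℝ) * T)) :
    (∫ t in (0 : ℝ)..(((N : ℝ) + 1) * T), a t * ξ t) =
      (∫ t in (0 : ℝ)..(((N : ℝ) + 1) * T),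
        b t * ∑ l ∈ Finset.range (d + 1),
          (-1 : ℂ) ^ l * (d.choose l : ℂ) *
            (ξ (t - (l : ℝ) * (τ : ℝ) * T) + η (t - (l : ℝ) * (τ : ℝ) * T))) -
      (∫ t in (-((d : ℝ) * (τ : ℝ) * T))..(0 : ℝ), v t * (ξ t + η t)) -
      ∫ t in (0 : ℝ)..(((N : ℝ) + 1) * T), a t * η t := by
  obtain ⟨e, rfl⟩ : ∃ e, d = e + 1 := ⟨d - 1, by omega⟩
  set S := ((N : ℝ) + 1) * T
  set h := (τ : ℝ) * T
  have hTh : T ≤ h := le_mul_of_one_le_left hT.le (by exact_mod_cast hτ)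
  have hh : 0 < h := hT.trans_le hTh
  have hshift : ∀ n : ℕ, (n : ℝ) * τ * T = n * h := fun n => mul_assoc _ _ _
  simp only [hshift, Nat.add_succ_sub_one, add_tsub_cancel_right] at hb_in hv ⊢
  have hKS : S < (N + 2 : ℕ) * h := by push_cast; nlinarith [hTh]
  have ha_right : ∀ t, S < t → a t = 0 := fun t ht => ha_supp t fun h' => by linarith [h'.2]
  have hb_sum := fun t (ht : 0 ≤ t) =>
    eq_sum_choose_of_eq_tsum e (N + 2) hh.le hKS ha_right hb_in hb_out ht
  have hb_cont : ContinuousOn b (Set.Icc 0 S) :=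
    (continuous_finsetSum _ fun k _ => continuous_const.mul
      (ha_cont.comp (continuous_add_const _))).continuousOn.congr fun t ht => hb_sum t ht.1
  have key := integral_mul_increment_eq_add (v := v) (ζ := fun t => ξ t + η t) (e + 1)
    hh.le (by positivity) hb_cont hb_out (hξ.add hη)
    (fun s hs => increment_neg_eq_of_eq_sum_choose e (N + 2) hh.le hKS ha_right hb_sum hs)
    (fun s hs => by
      rw [hv s hs, increment_neg_eq_sum_Icc_ceil _ hh (fun t ht => hb_out t ?_)]
      exact fun h' => by linarith [h'.1])
  simp only [increment] at key
  rw [key, intervalIntegral.integral_congr fun t _ => mul_add (a t) (ξ t) (η t),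
    intervalIntegral.integral_add (f := fun t => a t * ξ t) (g := fun t => a t * η t)
      ((ha_cont.mul hξ).intervalIntegrable _ _) ((ha_cont.mul hη).intervalIntegrable _ _)]
  ring

/-- The representation `A_{NT}ξ = B_{NT}ζ − V_{NT}ζ − A_{NT}η` with `ζ = ξ + η`,
used in Section 2 of the paper to reduce estimation of `A_{NT}ξ = ∫_0^{(N+1)T} a(t)ξ(t)dt`
from noisy observations to a functional of the increments of the observed process. -/
theorem functional_representation_noise (T : ℝ) (hT : 0 < T) (d τ N : ℕ)
    (hd : 1 ≤ d) (hτ : 1 ≤ τ) (hN : 1 ≤ N)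
    (a ξ η : ℝ → ℂ) (ha_cont : Continuous a)
    (ha_supp : ∀ t : ℝ, t ∉ Set.Icc (0 : ℝ) (((N : ℝ) + 1) * T) → a t = 0)
    (hξ : Continuous ξ) (hη : Continuous η)
    (b : ℝ → ℂ)
    (hb_in : ∀ t ∈ Set.Icc (0 : ℝ) (((N : ℝ) + 1) * T),
      b t = ∑' k : ℕ, (((k + d - 1).choose (d - 1) : ℕ) : ℂ) * a (t + (k : ℝ) * (τ : ℝ) * T))
    (hb_out : ∀ t : ℝ, t ∉ Set.Icc (0 : ℝ) (((N : ℝ) + 1) * T) → b t = 0)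
    (v : ℝ → ℂ)
    (hv : ∀ t ∈ Set.Ico (-((d : ℝ) * (τ : ℝ) * T)) (0 : ℝ),
      v t = ∑ l ∈ Finset.Icc (⌈(-t) / ((τ : ℝ) * T)⌉.toNat) d,
        (-1 : ℂ) ^ l * (d.choose l : ℂ) * b (t + (l : ℝ) * (τ : ℝ) * T)) :
    (∫ t in (0 : ℝ)..(((N : ℝ) + 1) * T), a t * ξ t) =
      (∫ t in (0 : ℝ)..(((N : ℝ) + 1) * T),
        b t * ∑ l ∈ Finset.range (d + 1),
          (-1 : ℂ) ^ l * (d.choose l : ℂ) *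
            (ξ (t - (l : ℝ) * (τ : ℝ) * T) + η (t - (l : ℝ) * (τ : ℝ) * T))) -
      (∫ t in (-((d : ℝ) * (τ : ℝ) * T))..(0 : ℝ), v t * (ξ t + η t)) -
      ∫ t in (0 : ℝ)..(((N : ℝ) + 1) * T), a t * η t :=
  functional_representation_noise_general T hT d τ N hd hτ a ξ η ha_cont ha_supp hξ hη b hb_in
    hb_out v hv
end

section
/- Let T > 0, let d, τ, N ≥ 1 be integers, and let a : ℝ → ℂ be continuous with a(t) = 0 for t ∉ [0,(N+1)T]. Define b : ℝ → ℂ by b(t) = ∑_{k=0}^∞ C(k+d−1, d−1) a(t + kτT) for t ∈ [0,(N+1)T] and b(t) = 0 otherwise. For m ∈ ℤ, j ∈ {0,…,N} and integers k ≥ 1 set a_{k,m} = T^{−1/2} ∫_0^T a(v + mT) exp(−2πi((−1)^k⌊k/2⌋)v/T) dv and b_{k,j} = T^{−1/2} ∫_0^T b(v + jT) exp(−2πi((−1)^k⌊k/2⌋)v/T) dv. Then for every j ∈ {0,…,N} and every k ≥ 1: b_{k,j} = ∑_{l=0}^{⌊(N−j)/τ⌋} C(l+d−1, d−1) · a_{k,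 j+τl}. -/
open MeasureTheory

/-- Relation (14) of Lemma 2.2 in scalar coordinates: the basis coefficients of the
blocks of the transformed weight function `b = D^{τT,N} a` are
`b_{k,j} = ∑_{l=0}^{⌊(N−j)/τ⌋} C(l+d−1, d−1) a_{k,j+τl}`. -/
theorem transformed_block_coefficients (T : ℝ) (hT : 0 < T) (d τ N : ℕ)
    (hd : 1 ≤ d) (hτ : 1 ≤ τ) (hN : 1 ≤ N)
    (a : ℝ → ℂ) (ha_cont : Continuous a)
    (ha_supp : ∀ t : ℝ, t ∉ Set.Icc (0 : ℝ) (((N : ℝ) + 1) * T) → a t = 0)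
    (b : ℝ → ℂ)
    (hb_in : ∀ t ∈ Set.Icc (0 : ℝ) (((N : ℝ) + 1) * T),
      b t = ∑' k : ℕ, (((k + d - 1).choose (d - 1) : ℕ) : ℂ) * a (t + (k : ℝ) * (τ : ℝ) * T))
    (hb_out : ∀ t : ℝ, t ∉ Set.Icc (0 : ℝ) (((N : ℝ) + 1) * T) → b t = 0)
    (ac bc : ℕ → ℤ → ℂ)
    (hac : ∀ k : ℕ, 1 ≤ k → ∀ m : ℤ,
      ac k m = ((1 / Real.sqrt T : ℝ) : ℂ) *
        ∫ v in (0 : ℝ)..T, a (v + (m : ℝ) * T) *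
          Complex.exp (-(2 * (Real.pi : ℂ) * Complex.I) *
            (((-1 : ℤ) ^ k * ((k / 2 : ℕ) : ℤ) : ℤ) : ℂ) * (v : ℂ) / (T : ℂ)))
    (hbc : ∀ k : ℕ, 1 ≤ k → ∀ j : ℤ,
      bc k j = ((1 / Real.sqrt T : ℝ) : ℂ) *
        ∫ v in (0 : ℝ)..T, b (v + (j : ℝ) * T) *
          Complex.exp (-(2 * (Real.pi : ℂ) * Complex.I) *
            (((-1 : ℤ) ^ k * ((k / 2 : ℕ) : ℤ) : ℤ) : ℂ) * (v : ℂ) / (T : ℂ))) :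
    ∀ j : ℕ, j ≤ N → ∀ k : ℕ, 1 ≤ k →
      bc k (j : ℤ) = ∑ l ∈ Finset.range ((N - j) / τ + 1),
        (((l + d - 1).choose (d - 1) : ℕ) : ℂ) * ac k ((j : ℤ) + (τ : ℤ) * (l : ℤ)) := by
  intro j hj k hk
  set M := (N - j) / τ + 1 with hM
  have hτ0 : 0 < τ := hτ
  -- exponential factor
  set e : ℝ → ℂ := fun v => Complex.exp (-(2 * (Real.pi : ℂ) * Complex.I) *
      (((-1 : ℤ) ^ k * ((k / 2 : ℕ) : ℤ) : ℤ) : ℂ) * (v : ℂ) / (T : ℂ)) with he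
  -- pointwise identity on (0, T]
  have key : ∀ v ∈ Set.Ioc (0:ℝ) T,
      b (v + (j:ℝ) * T) = ∑ l ∈ Finset.range M,
        (((l + d - 1).choose (d - 1) : ℕ) : ℂ) *
          a (v + ((((j:ℤ) + (τ:ℤ) * (l:ℤ)) : ℤ) : ℝ) * T) := by
    intro v hv
    obtain ⟨hv0, hvT⟩ := hv
    have hmem : v + (j:ℝ) * T ∈ Set.Icc (0:ℝ) (((N:ℝ) + 1) * T) := by
      constructor
      · have : (0:ℝ) ≤ (j:ℝ) * T := by positivity
        linarith
      · have hjN : (j:ℝ) ≤ (N:ℝ) := by exact_mod_cast hj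
        nlinarith
    rw [hb_in _ hmem]
    rw [tsum_eq_sum (s := Finset.range M)]
    · apply Finset.sum_congr rfl
      intro l _
      congr 1
      push_cast
      ring
    · intro l hl
      have hlM : M ≤ l := by
        by_contra h
        exact hl (Finset.mem_range.mpr (not_le.mp h))
      have hkey : N - j < M * τ := by
        have := Nat.lt_succ_self ((N - j) / τ)
        exact (Nat.div_lt_iff_lt_mul hτ0).mp this
      have h1 : N + 1 ≤ j + l * τ := by
        have h2 : N - j < l * τ := lt_of_lt_of_le hkey (Nat.mul_le_mul_right τ hlM)
        omega
      have h1R : ((N:ℝ) + 1) ≤ (j:ℝ) + (l:ℝ) * (τ:ℝ) := by exact_mod_cast h1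
      have hzero : a (v + (j:ℝ) * T + (l:ℝ) * (τ:ℝ) * T) = 0 := by
        apply ha_supp
        intro hc
        have := hc.2
        nlinarith
      rw [hzero, mul_zero]
  -- integrability of each term
  have hInt : ∀ m : ℤ, IntervalIntegrable
      (fun v => a (v + (m:ℝ) * T) * e v) volume 0 T := by
    intro m
    apply Continuous.intervalIntegrable
    exact (ha_cont.comp (continuous_id.add continuous_const)).mul
      (Complex.continuous_exp.comp
        ((continuous_const.mul Complex.continuous_ofReal).div_const _))
  rw [hbc k hk j]
  simp only [Int.cast_natCast]
  have hIcong : (∫ v in (0:ℝ)..T, b (v + (j:ℝ) * T) * e v)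
      = ∫ v in (0:ℝ)..T, (∑ l ∈ Finset.range M,
          (((l + d - 1).choose (d - 1) : ℕ) : ℂ) *
            a (v + ((((j:ℤ) + (τ:ℤ) * (l:ℤ)) : ℤ) : ℝ) * T)) * e v := by
    apply intervalIntegral.integral_congr_ae
    rw [Set.uIoc_of_le hT.le]
    filter_upwards with v hv
    rw [key v hv]
  rw [hIcong]
  have hsplit : (∫ v in (0:ℝ)..T, (∑ l ∈ Finset.range M,
          (((l + d - 1).choose (d - 1) : ℕ) : ℂ) *
            a (v + ((((j:ℤ) + (τ:ℤ) * (l:ℤ)) : ℤ) : ℝ) * T)) * e v)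
      = ∑ l ∈ Finset.range M, ∫ v in (0:ℝ)..T,
          (((l + d - 1).choose (d - 1) : ℕ) : ℂ) *
            (a (v + ((((j:ℤ) + (τ:ℤ) * (l:ℤ)) : ℤ) : ℝ) * T) * e v) := by
    rw [← intervalIntegral.integral_finset_sum]
    · congr 1
      funext v
      rw [Finset.sum_mul]
      apply Finset.sum_congr rfl
      intro l _
      ring
    · intro l _
      exact (hInt _).const_mul _
  rw [hsplit, Finset.mul_sum]
  apply Finset.sum_congr rfl
  intro l _
  rw [hac k hk, intervalIntegral.integral_const_mul]
  ring
end
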